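/- Lemma (linear bound on the score discrepancy in the entry game). Suppose for all x ∈ 𝒳 and the fixed θ: η_j(θ;x) ≥ c and η₁(θ;x) − η_j(θ;x) ≥ c for j = 2,3, η_j(θ;x) ≤ 1 for j = 1,2,3, ‖∇_θ η_j(θ;x)‖ ≤ C for j = 1,2,3, and p₀(y|x) ≥ c for all y. Then there exists 0 < K < ∞ (one may take K = 9C/c²) such that for every δ > 0, every conditional pmf p with sup_{y,x}|p(y|x) − p₀(y|x)| ≤ δ, and every x ∈ 𝒳: Δ(x; p, p₀) ≤ Kδ. -/
import Mathlib


open scoped BigOperators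
open Classical

noncomputable section

/-- Outcomes of the two-player entry game. -/
inductive EntryOutcome : Type
  | y00 | y01 | y10 | y11
deriving DecidableEq

instance : Fintype EntryOutcome :=
  ⟨{.y00, .y01, .y10, .y11}, by intro x; cases x <;> simp⟩

namespace EntryGame

variable {𝒳 : Type*} {d : ℕ}

/-- `Z₁(x;p) = p((1,0)|x) η₁(x) − (p((1,0)|x)+p((0,1)|x)) η₂(x)`. -/
def Z1 (η₁ η₂ : 𝒳 → ℝ) (p : 𝒳 → EntryOutcome → ℝ) (x : 𝒳) : ℝ :=
  p x .y10 * η₁ x - (p x .y10 + p x .y01) * η₂ x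

/-- `Z₂(x;p) = p((1,0)|x) η₁(x) − (p((1,0)|x)+p((0,1)|x)) η₃(x)`. -/
def Z2 (η₁ η₃ : 𝒳 → ℝ) (p : 𝒳 → EntryOutcome → ℝ) (x : 𝒳) : ℝ :=
  p x .y10 * η₁ x - (p x .y10 + p x .y01) * η₃ x

/-- Regime indicator `I₁ = 1{Z₁ ≤ 0}·1{Z₂ ≥ 0}`. -/
def I1 (η₁ η₂ η₃ : 𝒳 → ℝ) (p : 𝒳 → EntryOutcome → ℝ) (x : 𝒳) : ℝ :=
  if Z1 η₁ η₂ p x ≤ 0 ∧ 0 ≤ Z2 η₁ η₃ p x then 1 else 0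

/-- Regime indicator `I₂ = 1{Z₁ > 0}`. -/
def I2 (η₁ η₂ : 𝒳 → ℝ) (p : 𝒳 → EntryOutcome → ℝ) (x : 𝒳) : ℝ :=
  if 0 < Z1 η₁ η₂ p x then 1 else 0

/-- Regime indicator `I₃ = 1{Z₂ < 0}`. -/
def I3 (η₁ η₃ : 𝒳 → ℝ) (p : 𝒳 → EntryOutcome → ℝ) (x : 𝒳) : ℝ :=
  if Z2 η₁ η₃ p x < 0 then 1 else 0

/-- The entry-game score `s_θ(y|x;p)`; `g j = ∇_θ η_j`, and the scores of the outcomes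
`(0,0)` and `(1,1)` (which do not depend on `p`) are the given `s00`, `s11`. -/
def score (η₁ η₂ η₃ : 𝒳 → ℝ) (g₁ g₂ g₃ s00 s11 : 𝒳 → Fin d → ℝ)
    (p : 𝒳 → EntryOutcome → ℝ) (x : 𝒳) : EntryOutcome → Fin d → ℝ
  | .y00 => s00 x
  | .y11 => s11 x
  | .y10 =>
      (I1 η₁ η₂ η₃ p x / η₁ x) • g₁ x + (I2 η₁ η₂ p x / η₂ x) • g₂ x
        + (I3 η₁ η₃ p x / η₃ x) • g₃ x
  | .y01 =>
      (I1 η₁ η₂ η₃ p x / η₁ x) • g₁ x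
        + (I2 η₁ η₂ p x / (η₁ x - η₂ x)) • (g₁ x - g₂ x)
        + (I3 η₁ η₃ p x / (η₁ x - η₃ x)) • (g₁ x - g₃ x)

/-- The score discrepancy `Δ(x; p, p₀) = ‖Σ_y p₀(y|x)(s_θ(y|x;p) − s_θ(y|x;p₀))‖`. -/
def Δ (η₁ η₂ η₃ : 𝒳 → ℝ) (g₁ g₂ g₃ s00 s11 : 𝒳 → Fin d → ℝ)
    (p p₀ : 𝒳 → EntryOutcome → ℝ) (x : 𝒳) : ℝ :=
  ‖∑ y : EntryOutcome, p₀ x y •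
      (score η₁ η₂ η₃ g₁ g₂ g₃ s00 s11 p x y - score η₁ η₂ η₃ g₁ g₂ g₃ s00 s11 p₀ x y)‖

end EntryGame


open EntryGame

lemma EntryOutcome.sum_eq {M : Type*} [AddCommMonoid M] (f : EntryOutcome → M) :
    ∑ y : EntryOutcome, f y = f .y00 + f .y01 + f .y10 + f .y11 := by
  show Finset.sum {.y00, .y01, .y10, .y11} f = _
  simp [Finset.sum_insert, Finset.mem_insert]
  abel

lemma entry_scalar_identity (η1 η2 η3 P Q i2 i3 j2 j3 g1 g2 g3 : ℝ)
    (h1 : η1 ≠ 0) (h2 : η2 ≠ 0) (h3 : η3 ≠ 0) (h12 : η1 - η2 ≠ 0) (h13 : η1 - η3 ≠ 0) :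
    P * ((1-i2-i3)/η1*g1 + i2/η2*g2 + i3/η3*g3 - ((1-j2-j3)/η1*g1 + j2/η2*g2 + j3/η3*g3))
    + Q * ((1-i2-i3)/η1*g1 + i2/(η1-η2)*(g1-g2) + i3/(η1-η3)*(g1-g3)
          - ((1-j2-j3)/η1*g1 + j2/(η1-η2)*(g1-g2) + j3/(η1-η3)*(g1-g3)))
    = (-((i2-j2)*(P*η1-(P+Q)*η2))) * ((η1*(η1-η2))⁻¹*g1 - (η2*(η1-η2))⁻¹*g2)
    + (-((i3-j3)*(P*η1-(P+Q)*η3))) * ((η1*(η1-η3))⁻¹*g1 - (η3*(η1-η3))⁻¹*g3) := by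
  field_simp
  ring


set_option maxHeartbeats 1000000

/-- **Linear bound on the score discrepancy in the entry game.**
Under the stated bounds on the model probabilities `η_j`, their gradients, and the true
conditional pmf `p₀`, there is a finite constant `K > 0` (one may take `K = 9C/c²`) such that
for every `δ > 0` and every conditional pmf `p` within `δ` of `p₀` in the sup norm,
`Δ(x; p, p₀) ≤ K δ` for every `x ∈ 𝒳`. -/
theorem entry_game_score_discrepancy_linear_bound {𝒳 : Type*} {d : ℕ}
    (η₁ η₂ η₃ : 𝒳 → ℝ) (g₁ g₂ g₃ s00 s11 : 𝒳 → Fin d → ℝ)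
    (c C : ℝ) (hc : 0 < c)
    (hη₂ : ∀ x, c ≤ η₂ x) (hη₃ : ∀ x, c ≤ η₃ x)
    (hη₁₂ : ∀ x, c ≤ η₁ x - η₂ x) (hη₁₃ : ∀ x, c ≤ η₁ x - η₃ x)
    (hη₃₂ : ∀ x, η₃ x ≤ η₂ x)
    (hηle : ∀ x, η₁ x ≤ 1 ∧ η₂ x ≤ 1 ∧ η₃ x ≤ 1)
    (hg : ∀ x, ‖g₁ x‖ ≤ C ∧ ‖g₂ x‖ ≤ C ∧ ‖g₃ x‖ ≤ C)
    (p₀ : 𝒳 → EntryOutcome → ℝ)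
    (hp₀ : ∀ x, (∀ y, 0 ≤ p₀ x y) ∧ ∑ y, p₀ x y = 1)
    (hp₀c : ∀ x y, c ≤ p₀ x y) :
    ∃ K : ℝ, 0 < K ∧
      ∀ δ > (0 : ℝ), ∀ p : 𝒳 → EntryOutcome → ℝ,
        (∀ x, (∀ y, 0 ≤ p x y) ∧ ∑ y, p x y = 1) →
        (∀ x y, |p x y - p₀ x y| ≤ δ) →
        ∀ x, Δ η₁ η₂ η₃ g₁ g₂ g₃ s00 s11 p p₀ x ≤ K * δ := by

  classical
  refine ⟨12 * |C| * (c ^ 2)⁻¹ + 1, by positivity, ?_⟩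
  intro δ hδ p hp hpδ x
  -- basic positivity facts
  have hc2 : (0:ℝ) < c ^ 2 := by positivity
  have hη2x : c ≤ η₂ x := hη₂ x
  have hη3x : c ≤ η₃ x := hη₃ x
  have hη12 : c ≤ η₁ x - η₂ x := hη₁₂ x
  have hη13 : c ≤ η₁ x - η₃ x := hη₁₃ x
  have hη1pos : 0 < η₁ x := by linarith
  have hη2pos : 0 < η₂ x := by linarith
  have hη3pos : 0 < η₃ x := by linarith
  have h12pos : 0 < η₁ x - η₂ x := by linarith
  have h13pos : 0 < η₁ x - η₃ x := by linarith
  have hC0 : 0 ≤ C := le_trans (norm_nonneg _) (hg x).1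
  obtain ⟨hle1, hle2, hle3⟩ := hηle x
  -- indicator sum is 1
  have hI : ∀ q : 𝒳 → EntryOutcome → ℝ, (∀ y, 0 ≤ q x y) →
      I1 η₁ η₂ η₃ q x = 1 - I2 η₁ η₂ q x - I3 η₁ η₃ q x := by
    intro q hq
    have hZZ : Z1 η₁ η₂ q x ≤ Z2 η₁ η₃ q x := by
      have := mul_nonneg (add_nonneg (hq .y10) (hq .y01)) (sub_nonneg.2 (hη₃₂ x))
      unfold Z1 Z2
      nlinarith
    by_cases h2 : 0 < Z1 η₁ η₂ q x <;> by_cases h3 : Z2 η₁ η₃ q x < 0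
    · exact absurd h3 (by linarith)
    · simp [I1, I2, I3, h2, h3, not_le.2 h2]
    · have : ¬ (0 : ℝ) ≤ Z2 η₁ η₃ q x := not_le.2 h3
      simp [I1, I2, I3, h2, h3, this]
    · simp [I1, I2, I3, h2, h3, not_lt.1 h2, not_lt.1 h3]
  -- Lipschitz bounds on Z1, Z2
  have h10 := abs_le.1 (hpδ x .y10)
  have h01 := abs_le.1 (hpδ x .y01)
  have hZ1lip : |Z1 η₁ η₂ p x - Z1 η₁ η₂ p₀ x| ≤ 3 * δ := by
    have hrw : Z1 η₁ η₂ p x - Z1 η₁ η₂ p₀ x =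
        (p x .y10 - p₀ x .y10) * η₁ x
          - ((p x .y10 - p₀ x .y10) + (p x .y01 - p₀ x .y01)) * η₂ x := by
      unfold Z1; ring
    rw [hrw, abs_le]
    constructor <;> nlinarith [h10.1, h10.2, h01.1, h01.2, hη1pos.le, hη2pos.le]
  have hZ2lip : |Z2 η₁ η₃ p x - Z2 η₁ η₃ p₀ x| ≤ 3 * δ := by
    have hrw : Z2 η₁ η₃ p x - Z2 η₁ η₃ p₀ x =
        (p x .y10 - p₀ x .y10) * η₁ x
          - ((p x .y10 - p₀ x .y10) + (p x .y01 - p₀ x .y01)) * η₃ x := by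
      unfold Z2; ring
    rw [hrw, abs_le]
    constructor <;> nlinarith [h10.1, h10.2, h01.1, h01.2, hη1pos.le, hη3pos.le]
  have hZ1lip' := abs_le.1 hZ1lip
  have hZ2lip' := abs_le.1 hZ2lip
  -- key indicator-difference bounds
  have key2 : |I2 η₁ η₂ p x - I2 η₁ η₂ p₀ x| * |Z1 η₁ η₂ p₀ x| ≤ 3 * δ := by
    by_cases ha : 0 < Z1 η₁ η₂ p x <;> by_cases hb : 0 < Z1 η₁ η₂ p₀ x
    · simp [I2, ha, hb]; linarith
    · have : |Z1 η₁ η₂ p₀ x| ≤ 3 * δ := by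
        rw [abs_of_nonpos (not_lt.1 hb)]; linarith
      simpa [I2, ha, hb] using this
    · have : |Z1 η₁ η₂ p₀ x| ≤ 3 * δ := by
        rw [abs_of_pos hb]; linarith
      simpa [I2, ha, hb, abs_sub_comm] using this
    · simp [I2, ha, hb]; linarith
  have key3 : |I3 η₁ η₃ p x - I3 η₁ η₃ p₀ x| * |Z2 η₁ η₃ p₀ x| ≤ 3 * δ := by
    by_cases ha : Z2 η₁ η₃ p x < 0 <;> by_cases hb : Z2 η₁ η₃ p₀ x < 0
    · simp [I3, ha, hb]; linarith
    · have : |Z2 η₁ η₃ p₀ x| ≤ 3 * δ := by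
        rw [abs_of_nonneg (not_lt.1 hb)]; linarith
      simpa [I3, ha, hb] using this
    · have : |Z2 η₁ η₃ p₀ x| ≤ 3 * δ := by
        rw [abs_of_neg hb]; linarith
      simpa [I3, ha, hb, abs_sub_comm] using this
    · simp [I3, ha, hb]; linarith
  -- the two direction vectors
  set u : Fin d → ℝ :=
    (η₁ x * (η₁ x - η₂ x))⁻¹ • g₁ x - (η₂ x * (η₁ x - η₂ x))⁻¹ • g₂ x with hu_def
  set v : Fin d → ℝ :=
    (η₁ x * (η₁ x - η₃ x))⁻¹ • g₁ x - (η₃ x * (η₁ x - η₃ x))⁻¹ • g₃ x with hv_def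
  set c₂ : ℝ := -((I2 η₁ η₂ p x - I2 η₁ η₂ p₀ x) * Z1 η₁ η₂ p₀ x) with hc2_def
  set c₃ : ℝ := -((I3 η₁ η₃ p x - I3 η₁ η₃ p₀ x) * Z2 η₁ η₃ p₀ x) with hc3_def
  -- main algebraic identity
  have hrw : (∑ y : EntryOutcome, p₀ x y •
      (score η₁ η₂ η₃ g₁ g₂ g₃ s00 s11 p x y - score η₁ η₂ η₃ g₁ g₂ g₃ s00 s11 p₀ x y))
      = c₂ • u + c₃ • v := by
    rw [EntryOutcome.sum_eq]
    simp only [score, sub_self, smul_zero, zero_add, add_zero]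
    rw [hI p (hp x).1, hI p₀ (hp₀ x).1]
    funext k
    simp only [hu_def, hv_def, hc2_def, hc3_def, Z1, Z2, Pi.add_apply, Pi.sub_apply,
      Pi.smul_apply, smul_eq_mul]
    have := entry_scalar_identity (η₁ x) (η₂ x) (η₃ x) (p₀ x .y10) (p₀ x .y01)
      (I2 η₁ η₂ p x) (I3 η₁ η₃ p x) (I2 η₁ η₂ p₀ x) (I3 η₁ η₃ p₀ x)
      (g₁ x k) (g₂ x k) (g₃ x k) hη1pos.ne' hη2pos.ne' hη3pos.ne' h12pos.ne' h13pos.ne'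
    linear_combination this
  -- norm bounds for u and v
  have hinv12 : (η₁ x * (η₁ x - η₂ x))⁻¹ ≤ (c ^ 2)⁻¹ := by
    apply inv_anti₀ hc2; nlinarith
  have hinv12' : (η₂ x * (η₁ x - η₂ x))⁻¹ ≤ (c ^ 2)⁻¹ := by
    apply inv_anti₀ hc2; nlinarith
  have hinv13 : (η₁ x * (η₁ x - η₃ x))⁻¹ ≤ (c ^ 2)⁻¹ := by
    apply inv_anti₀ hc2; nlinarith
  have hinv13' : (η₃ x * (η₁ x - η₃ x))⁻¹ ≤ (c ^ 2)⁻¹ := by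
    apply inv_anti₀ hc2; nlinarith
  have hupos : (0:ℝ) ≤ (η₁ x * (η₁ x - η₂ x))⁻¹ := by positivity
  have hu_bound : ‖u‖ ≤ 2 * C * (c ^ 2)⁻¹ := by
    calc ‖u‖ ≤ ‖(η₁ x * (η₁ x - η₂ x))⁻¹ • g₁ x‖ + ‖(η₂ x * (η₁ x - η₂ x))⁻¹ • g₂ x‖ :=
          norm_sub_le _ _
      _ ≤ (c ^ 2)⁻¹ * C + (c ^ 2)⁻¹ * C := by
          gcongr
          · rw [norm_smul, Real.norm_eq_abs, abs_of_nonneg (by positivity)]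
            exact mul_le_mul hinv12 (hg x).1 (norm_nonneg _) (by positivity)
          · rw [norm_smul, Real.norm_eq_abs, abs_of_nonneg (by positivity)]
            exact mul_le_mul hinv12' (hg x).2.1 (norm_nonneg _) (by positivity)
      _ = 2 * C * (c ^ 2)⁻¹ := by ring
  have hv_bound : ‖v‖ ≤ 2 * C * (c ^ 2)⁻¹ := by
    calc ‖v‖ ≤ ‖(η₁ x * (η₁ x - η₃ x))⁻¹ • g₁ x‖ + ‖(η₃ x * (η₁ x - η₃ x))⁻¹ • g₃ x‖ :=
          norm_sub_le _ _
      _ ≤ (c ^ 2)⁻¹ * C + (c ^ 2)⁻¹ * C := by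
          gcongr
          · rw [norm_smul, Real.norm_eq_abs, abs_of_nonneg (by positivity)]
            exact mul_le_mul hinv13 (hg x).1 (norm_nonneg _) (by positivity)
          · rw [norm_smul, Real.norm_eq_abs, abs_of_nonneg (by positivity)]
            exact mul_le_mul hinv13' (hg x).2.2 (norm_nonneg _) (by positivity)
      _ = 2 * C * (c ^ 2)⁻¹ := by ring
  have hc2abs : |c₂| ≤ 3 * δ := by
    rw [hc2_def, abs_neg, abs_mul]; exact key2
  have hc3abs : |c₃| ≤ 3 * δ := by
    rw [hc3_def, abs_neg, abs_mul]; exact key3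
  -- assemble
  rw [Δ, hrw]
  calc ‖c₂ • u + c₃ • v‖ ≤ ‖c₂ • u‖ + ‖c₃ • v‖ := norm_add_le _ _
    _ = |c₂| * ‖u‖ + |c₃| * ‖v‖ := by rw [norm_smul, norm_smul, Real.norm_eq_abs,
        Real.norm_eq_abs]
    _ ≤ (3 * δ) * (2 * C * (c ^ 2)⁻¹) + (3 * δ) * (2 * C * (c ^ 2)⁻¹) :=
        add_le_add (mul_le_mul hc2abs hu_bound (norm_nonneg _) (by positivity))
          (mul_le_mul hc3abs hv_bound (norm_nonneg _) (by positivity))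
    _ ≤ (12 * |C| * (c ^ 2)⁻¹ + 1) * δ := by
        have h1 : C ≤ |C| := le_abs_self C
        have h2 : (0:ℝ) ≤ (c ^ 2)⁻¹ := by positivity
        nlinarith [mul_nonneg (mul_nonneg (sub_nonneg.2 h1) h2) hδ.le]
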